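/- Let u : ℝ × ℝ² → ℝ², P : ℝ × ℝ² → ℝ and d : ℝ × ℝ² → ℝ³ be C³ functions satisfying, at every point (t,x₁,x₂) with x₂ ≥ 0: ∂ₜu + (u·∇)u − Δu + ∇P = −∇·(∇d ⊙ ∇d − ½|∇d|²·Id₂), ∇·u = 0, and ∂ₜd + (u·∇)d = Δd + |∇d|²·d. Suppose moreover that for all (t,x₁): u₂(t,x₁,0) = 0, ∂₂u₁(t,x₁,0) = 0, d₃(t,x₁,0) = 0, ∂₂d₁(t,x₁,0) = 0 and ∂₂d₂(t,x₁,0) = 0. Then ∂₂P(t,x₁,0) = 0 for all (t,x₁). -/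

import Mathlib

/-!
On `{x₂ = 0}` the second component of the momentum equation reduces to
`∂₂P = -∑ₖ Δdₖ ∂₂dₖ`. Since `u₂` vanishes on the boundary, so do `∂ₜu₂` and `∂₁u₂`, and
`Δu₂ = ∂₁₁u₂ - ∂₂∂₁u₁ = -∂₁∂₂u₁ = 0` by incompressibility and the slip condition; on the other
side, for every `C²` map `d` the divergence of the Ericksen stress `∇d ⊙ ∇d - ½|∇d|² Id₂` is
`∑ₖ Δdₖ ∇dₖ`. The terms `k = 1, 2` vanish because `∂₂d₁ = ∂₂d₂ = 0`, and `Δd₃ = 0` on the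
boundary by the director equation, since `d₃` vanishes there with its tangential and time
derivatives.
-/

open scoped BigOperators

noncomputable section

abbrev E2 := EuclideanSpace ℝ (Fin 2)
abbrev E3 := EuclideanSpace ℝ (Fin 3)

/-- Time derivative `∂ₜf` of a scalar function of `(t, x) ∈ ℝ × ℝ²`. -/
noncomputable def dt (f : ℝ × E2 → ℝ) (p : ℝ × E2) : ℝ :=
  fderiv ℝ f p ((1 : ℝ), (0 : E2))

/-- Spatial partial derivative `∂ᵢf` of a scalar function of `(t, x) ∈ ℝ × ℝ²`. -/
noncomputable def ds (i : Fin 2) (f : ℝ × E2 → ℝ) (p : ℝ × E2) : ℝ :=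
  fderiv ℝ f p ((0 : ℝ), EuclideanSpace.single i 1)

/-- Spatial Laplacian `Δf = ∂₁₁f + ∂₂₂f`. -/
noncomputable def lap (f : ℝ × E2 → ℝ) (p : ℝ × E2) : ℝ :=
  ds 0 (fun q => ds 0 f q) p + ds 1 (fun q => ds 1 f q) p

/-- `|∇d|² = Σᵢⱼ (∂ᵢdⱼ)²` (spatial gradient). -/
noncomputable def gradSq (d : ℝ × E2 → E3) (p : ℝ × E2) : ℝ :=
  ∑ i : Fin 2, ∑ k : Fin 3, (ds i (fun q => d q k) p) ^ 2

/-- The momentum equation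
`∂ₜu + (u·∇)u − Δu + ∇P = −∇·(∇d ⊙ ∇d − ½|∇d|² Id₂)` at a point, componentwise. -/
def momentumEq (u : ℝ × E2 → E2) (P : ℝ × E2 → ℝ) (d : ℝ × E2 → E3)
    (p : ℝ × E2) : Prop :=
  ∀ j : Fin 2,
    dt (fun q => u q j) p + (∑ i : Fin 2, u p i * ds i (fun q => u q j) p)
        - lap (fun q => u q j) p + ds j P p
      = - ∑ i : Fin 2, ds i (fun q =>
          (∑ k : Fin 3, ds i (fun q' => d q' k) q * ds j (fun q' => d q' k) q)
            - (if i = j then (1 : ℝ) / 2 else 0) * gradSq d q) p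

/-- Incompressibility `∇·u = 0` at a point. -/
def divFree (u : ℝ × E2 → E2) (p : ℝ × E2) : Prop :=
  ds 0 (fun q => u q 0) p + ds 1 (fun q => u q 1) p = 0

/-- The director equation `∂ₜd + (u·∇)d = Δd + |∇d|² d` at a point, componentwise. -/
def directorEq (u : ℝ × E2 → E2) (d : ℝ × E2 → E3) (p : ℝ × E2) : Prop :=
  ∀ k : Fin 3,
    dt (fun q => d q k) p + (∑ j : Fin 2, u p j * ds j (fun q => d q k) p)
      = lap (fun q => d q k) p + gradSq d p * d p k

theorem fderiv_apply_eq_zero_of_eq_zero_on_ray {E F : Type*} [NormedAddCommGroup E]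
    [NormedSpace ℝ E] [NormedAddCommGroup F] [NormedSpace ℝ F] {f : E → F} {p v : E}
    (hf : DifferentiableAt ℝ f p) (hv : ∀ t : ℝ, 0 ≤ t → f (p + t • v) = 0) :
    fderiv ℝ f p v = 0 := by
  have hline : HasDerivAt (fun t : ℝ => f (p + t • v)) (fderiv ℝ f p v) 0 := by
    have hray : HasDerivAt (fun t : ℝ => p + t • v) v 0 := by
      simpa using ((hasDerivAt_id (0 : ℝ)).smul_const v).const_add p
    exact hf.hasFDerivAt.comp_hasDerivAt_of_eq 0 hray (by simp)
  have hzero : HasDerivWithinAt (fun t : ℝ => f (p + t • v)) 0 (Set.Ici 0) 0 :=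
    (hasDerivWithinAt_const _ _ 0).congr (fun t ht => hv t ht) (hv 0 le_rfl)
  exact (uniqueDiffOn_Ici 0 0 Set.self_mem_Ici).eq_deriv _ hline.hasDerivWithinAt hzero

section
variable {f g : ℝ × E2 → ℝ} {p : ℝ × E2}

theorem dt_eq_zero_of_eq_zero_on_boundary (hf : DifferentiableAt ℝ f p) (hp : p.2 1 = 0)
    (h0 : ∀ q : ℝ × E2, q.2 1 = 0 → f q = 0) : dt f p = 0 :=
  fderiv_apply_eq_zero_of_eq_zero_on_ray hf fun _ _ => h0 _ (by simp [hp])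

theorem ds_zero_eq_zero_of_eq_zero_on_boundary (hf : DifferentiableAt ℝ f p)
    (hp : p.2 1 = 0) (h0 : ∀ q : ℝ × E2, q.2 1 = 0 → f q = 0) : ds 0 f p = 0 :=
  fderiv_apply_eq_zero_of_eq_zero_on_ray hf fun _ _ => h0 _ (by simp [hp])

theorem ds_one_eq_zero_of_eq_zero_on_halfPlane (hf : DifferentiableAt ℝ f p)
    (hp : p.2 1 = 0) (h0 : ∀ q : ℝ × E2, 0 ≤ q.2 1 → f q = 0) : ds 1 f p = 0 :=
  fderiv_apply_eq_zero_of_eq_zero_on_ray hf fun _ ht => h0 _ (by simp [hp, ht])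

theorem contDiff_ds {m n : WithTop ℕ∞} (hf : ContDiff ℝ n f) (hmn : m + 1 ≤ n) (i : Fin 2) :
    ContDiff ℝ m (fun q => ds i f q) :=
  (hf.fderiv_right hmn).clm_apply contDiff_const

theorem differentiable_ds_apply {n : ℕ} {v : ℝ × E2 → EuclideanSpace ℝ (Fin n)}
    (hv : ContDiff ℝ 2 v) (i : Fin 2) (k : Fin n) :
    Differentiable ℝ (fun q => ds i (fun q' => v q' k) q) :=
  (contDiff_ds (contDiff_euclidean.mp hv k) le_rfl i).differentiable one_ne_zero

theorem ds_add (i : Fin 2) (hf : DifferentiableAt ℝ f p) (hg : DifferentiableAt ℝ g p) :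
    ds i (fun q => f q + g q) p = ds i f p + ds i g p := by
  simp [ds, fderiv_fun_add hf hg]

theorem ds_sub (i : Fin 2) (hf : DifferentiableAt ℝ f p) (hg : DifferentiableAt ℝ g p) :
    ds i (fun q => f q - g q) p = ds i f p - ds i g p := by
  simp [ds, fderiv_fun_sub hf hg]

theorem ds_mul (i : Fin 2) (hf : DifferentiableAt ℝ f p) (hg : DifferentiableAt ℝ g p) :
    ds i (fun q => f q * g q) p = ds i f p * g p + f p * ds i g p := by
  simp only [ds, fderiv_fun_mul hf hg, add_apply, smul_apply, smul_eq_mul]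
  ring

theorem ds_const_mul (c : ℝ) (i : Fin 2) (hf : DifferentiableAt ℝ f p) :
    ds i (fun q => c * f q) p = c * ds i f p := by
  simp [ds, fderiv_const_mul hf]

theorem ds_sum {ι : Type*} (s : Finset ι) (F : ι → ℝ × E2 → ℝ) (i : Fin 2)
    (hF : ∀ k ∈ s, DifferentiableAt ℝ (F k) p) :
    ds i (fun q => ∑ k ∈ s, F k q) p = ∑ k ∈ s, ds i (F k) p := by
  simp [ds, fderiv_fun_sum hF]

theorem ds_comm (hf : ContDiff ℝ 2 f) (i j : Fin 2) :
    ds i (fun q => ds j f q) p = ds j (fun q => ds i f q) p := by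
  have hdf : DifferentiableAt ℝ (fderiv ℝ f) p :=
    (hf.fderiv_right le_rfl).differentiable one_ne_zero p
  simp only [ds, fderiv_clm_apply hdf (differentiableAt_const _), fderiv_fun_const,
    Pi.zero_apply, ContinuousLinearMap.comp_zero, zero_add, ContinuousLinearMap.flip_apply]
  exact hf.contDiffAt.isSymmSndFDerivAt (by simp) _ _

end

section
variable {d : ℝ × E2 → E3} {p : ℝ × E2}

def ericksenStress (d : ℝ × E2 → E3) (i j : Fin 2) (q : ℝ × E2) : ℝ :=
  (∑ k : Fin 3, ds i (fun q' => d q' k) q * ds j (fun q' => d q' k) q)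
    - (if i = j then (1 : ℝ) / 2 else 0) * gradSq d q

theorem ds_gradSq (hd : ContDiff ℝ 2 d) (j : Fin 2) :
    ds j (gradSq d) p = 2 * ∑ i : Fin 2, ∑ k : Fin 3,
      ds i (fun q => d q k) p * ds j (fun q => ds i (fun q' => d q' k) q) p := by
  have ha := differentiable_ds_apply hd
  unfold gradSq
  rw [ds_sum _ _ _ (by fun_prop), Finset.mul_sum]
  refine Finset.sum_congr rfl fun i _ => ?_
  rw [ds_sum _ _ _ (by fun_prop), Finset.mul_sum]
  refine Finset.sum_congr rfl fun k _ => ?_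
  simp only [sq]
  rw [ds_mul _ (ha i k p) (ha i k p)]
  ring

theorem sum_ds_ericksenStress (hd : ContDiff ℝ 2 d) (j : Fin 2) :
    ∑ i : Fin 2, ds i (ericksenStress d i j) p
      = ∑ k : Fin 3, lap (fun q => d q k) p * ds j (fun q => d q k) p := by
  have ha := differentiable_ds_apply hd
  have hG : Differentiable ℝ (gradSq d) := by unfold gradSq; fun_prop
  have hexp : ∀ i, ds i (ericksenStress d i j) p
      = (∑ k : Fin 3, (ds i (fun q => ds i (fun q' => d q' k) q) p * ds j (fun q => d q k) p
          + ds i (fun q => d q k) p * ds j (fun q => ds i (fun q' => d q' k) q) p))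
        - (if i = j then (1 : ℝ) / 2 else 0) * ds i (gradSq d) p := by
    intro i
    unfold ericksenStress
    rw [ds_sub _ (by fun_prop) (by fun_prop), ds_sum _ _ _ (by fun_prop), ds_const_mul _ _ (hG p)]
    simp only [ds_mul _ (ha _ _ p) (ha _ _ p), ds_comm (contDiff_euclidean.mp hd _) j]
  simp only [hexp, Finset.sum_sub_distrib, ite_mul, zero_mul, Finset.sum_ite_eq',
    Finset.mem_univ, if_true, ds_gradSq hd, Finset.sum_add_distrib]
  rw [Finset.sum_comm, ← mul_assoc, one_div, inv_mul_cancel₀ two_ne_zero, one_mul,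
    add_sub_cancel_right]
  refine Finset.sum_congr rfl fun k _ => ?_
  rw [← Finset.sum_mul, Fin.sum_univ_two, lap]

end

section
variable {u : ℝ × E2 → E2} {d : ℝ × E2 → E3} {p : ℝ × E2}

theorem lap_eq_zero_of_divFree_of_slip (hu : ContDiff ℝ 2 u) (hp : p.2 1 = 0)
    (hdiv : ∀ q : ℝ × E2, 0 ≤ q.2 1 → divFree u q)
    (hnormal : ∀ q : ℝ × E2, q.2 1 = 0 → u q 1 = 0)
    (hslip : ∀ q : ℝ × E2, q.2 1 = 0 → ds 1 (fun q' => u q' 0) q = 0) :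
    lap (fun q => u q 1) p = 0 := by
  have hdiff := differentiable_ds_apply hu
  have hu1 := (contDiff_euclidean.mp hu 1).differentiable two_ne_zero
  have h00 : ds 0 (fun q => ds 0 (fun q' => u q' 1) q) p = 0 :=
    ds_zero_eq_zero_of_eq_zero_on_boundary (hdiff 0 1 p) hp fun q hq =>
      ds_zero_eq_zero_of_eq_zero_on_boundary (hu1 q) hq hnormal
  have h10 : ds 1 (fun q => ds 0 (fun q' => u q' 0) q) p = 0 := by
    rw [ds_comm (contDiff_euclidean.mp hu 0)]
    exact ds_zero_eq_zero_of_eq_zero_on_boundary (hdiff 1 0 p) hp hslip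
  have h11 : ds 1 (fun q => ds 0 (fun q' => u q' 0) q + ds 1 (fun q' => u q' 1) q) p = 0 :=
    ds_one_eq_zero_of_eq_zero_on_halfPlane ((hdiff 0 0 p).add (hdiff 1 1 p)) hp hdiv
  rw [ds_add 1 (hdiff 0 0 p) (hdiff 1 1 p), h10, zero_add] at h11
  rw [lap, h00, h11, add_zero]

theorem lap_eq_zero_of_directorEq {k : Fin 3} (hd : DifferentiableAt ℝ d p) (hp : p.2 1 = 0)
    (hdir : directorEq u d p) (hnormal : u p 1 = 0)
    (hdk : ∀ q : ℝ × E2, q.2 1 = 0 → d q k = 0) :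
    lap (fun q => d q k) p = 0 := by
  have hdk' : DifferentiableAt ℝ (fun q => d q k) p := by fun_prop
  have h := hdir k
  rw [dt_eq_zero_of_eq_zero_on_boundary hdk' hp hdk, Fin.sum_univ_two,
    ds_zero_eq_zero_of_eq_zero_on_boundary hdk' hp hdk, hnormal, hdk p hp] at h
  linarith

end

theorem pressure_neumann_on_boundary_general
    (u : ℝ × E2 → E2) (P : ℝ × E2 → ℝ) (d : ℝ × E2 → E3)
    (hu : ContDiff ℝ 3 u) (hd : ContDiff ℝ 3 d)
    (heq : ∀ p : ℝ × E2, 0 ≤ p.2 1 →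
      momentumEq u P d p ∧ divFree u p ∧ directorEq u d p)
    (hbc : ∀ p : ℝ × E2, p.2 1 = 0 →
      u p 1 = 0 ∧ ds 1 (fun q => u q 0) p = 0 ∧ d p 2 = 0 ∧
      ds 1 (fun q => d q 0) p = 0 ∧ ds 1 (fun q => d q 1) p = 0) :
    ∀ p : ℝ × E2, p.2 1 = 0 → ds 1 P p = 0 := by
  intro p hp
  have hnormal : ∀ q : ℝ × E2, q.2 1 = 0 → u q 1 = 0 := fun q hq => (hbc q hq).1
  obtain ⟨hmom, -, hdir⟩ := heq p hp.ge
  obtain ⟨-, -, -, hd0, hd1⟩ := hbc p hp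
  have hu1 : DifferentiableAt ℝ (fun q => u q 1) p :=
    (contDiff_euclidean.mp hu 1).differentiable (by norm_num) p
  have hmom1 : dt (fun q => u q 1) p + ∑ i : Fin 2, u p i * ds i (fun q => u q 1) p
      - lap (fun q => u q 1) p + ds 1 P p = -∑ i : Fin 2, ds i (ericksenStress d i 1) p :=
    hmom 1
  have hlap_u : lap (fun q => u q 1) p = 0 :=
    lap_eq_zero_of_divFree_of_slip (hu.of_le (by norm_num)) hp (fun q hq => (heq q hq).2.1)
      hnormal fun q hq => (hbc q hq).2.1
  have hlap_d : lap (fun q => d q 2) p = 0 :=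
    lap_eq_zero_of_directorEq (hd.differentiable (by norm_num) p) hp hdir (hnormal p hp)
      fun q hq => (hbc q hq).2.2.1
  rw [sum_ds_ericksenStress (hd.of_le (by norm_num)), Fin.sum_univ_three, hd0, hd1, hlap_d,
    dt_eq_zero_of_eq_zero_on_boundary hu1 hp hnormal, Fin.sum_univ_two,
    ds_zero_eq_zero_of_eq_zero_on_boundary hu1 hp hnormal, hnormal p hp, hlap_u] at hmom1
  linarith

/-- If `(u, P, d)` are `C³`, satisfy the full nematic liquid crystal
system on the closed upper half-plane `{x₂ ≥ 0}`, and satisfy the Navier perfect-slip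
and partially free boundary conditions `u₂ = ∂₂u₁ = d₃ = ∂₂d₁ = ∂₂d₂ = 0` on the
boundary `{x₂ = 0}`, then the pressure satisfies the homogeneous Neumann condition
`∂₂P = 0` on `{x₂ = 0}`. -/
theorem pressure_neumann_on_boundary
    (u : ℝ × E2 → E2) (P : ℝ × E2 → ℝ) (d : ℝ × E2 → E3)
    (hu : ContDiff ℝ 3 u) (hP : ContDiff ℝ 3 P) (hd : ContDiff ℝ 3 d)
    (heq : ∀ p : ℝ × E2, 0 ≤ p.2 1 →
      momentumEq u P d p ∧ divFree u p ∧ directorEq u d p)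
    (hbc : ∀ p : ℝ × E2, p.2 1 = 0 →
      u p 1 = 0 ∧ ds 1 (fun q => u q 0) p = 0 ∧ d p 2 = 0 ∧
      ds 1 (fun q => d q 0) p = 0 ∧ ds 1 (fun q => d q 1) p = 0) :
    ∀ p : ℝ × E2, p.2 1 = 0 → ds 1 P p = 0 :=
  pressure_neumann_on_boundary_general u P d hu hd heq hbc

end
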